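/- arXiv:0707.3187 — 6 statements merged into one kernel-verified Lean document; each statement's English description precedes it below -/
import Mathlib

section
/- For every complex z with Re(z) > −1, lim_{N→∞} N^{−z²/2} · e^{zN} · ∏_{n=1}^N (1 + z/n)^{−n} = (A^z · exp(z²/2) · G(1+z))^{−1}, where A = √(e/(2π)). -/
/-!
With `w = z / (n + 1)`, the logarithm of the `n`-th Barnes factor is
`(n + 1) (log (1 + w) - w + w² / 2) = O(|z|³ / n²)`, so the Weierstrass product converges to the
exponential of a convergent series. Its `N`-th partial product is
`∏_{n ≤ N} (1 + z/n)^n · e^{-zN + z² H_N / 2}` with `H_N` the harmonic number, hence the sequence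
of the theorem equals `exp (z² (H_N - log N) / 2)` divided by that partial product, and
`H_N - log N → γ`. Finally `A^z (2π)^{z/2} = e^{z/2}` cancels against the prefactor of `barnesG`.
-/

open Filter Topology

/-- The Barnes G-function, defined via its convergent infinite product representation:
`G(1+z) = (2π)^{z/2} exp(−[(1+γ)z² + z]/2) ∏_{n=1}^∞ (1+z/n)^n exp(−z + z²/(2n))`,
where `γ` is the Euler–Mascheroni constant. -/
noncomputable def barnesG (w : ℂ) : ℂ :=
  (2 * Real.pi : ℂ) ^ ((w - 1) / 2) *
    Complex.exp (-(((1 + (Real.eulerMascheroniConstant : ℂ)) * (w - 1) ^ 2 + (w - 1)) / 2)) *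
    ∏' n : ℕ, ((1 + (w - 1) / (n + 1)) ^ (n + 1) *
      Complex.exp (-(w - 1) + (w - 1) ^ 2 / (2 * ((n : ℂ) + 1))))

open Complex Asymptotics

namespace Complex

noncomputable def barnesFactor (z : ℂ) (n : ℕ) : ℂ :=
  (1 + z / (n + 1)) ^ (n + 1) * exp (-z + z ^ 2 / (2 * ((n : ℂ) + 1)))

noncomputable def logBarnesFactor (z : ℂ) (n : ℕ) : ℂ :=
  (n + 1) * log (1 + z / (n + 1)) - z + z ^ 2 / (2 * ((n : ℂ) + 1))

theorem one_add_div_natCast_add_one_ne_zero {z : ℂ} (hz : -1 < z.re) (n : ℕ) :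
    1 + z / (n + 1) ≠ 0 := by
  intro h
  have hz' : z = -((n : ℂ) + 1) := by
    field_simp at h
    linear_combination h
  have := congrArg re hz'
  simp only [neg_re, add_re, natCast_re, one_re] at this
  linarith [n.cast_nonneg (α := ℝ)]

theorem exp_logBarnesFactor {z : ℂ} {n : ℕ} (hz : 1 + z / (n + 1) ≠ 0) :
    exp (logBarnesFactor z n) = barnesFactor z n := by
  have : logBarnesFactor z n =
      (n + 1 : ℕ) * log (1 + z / (n + 1)) + (-z + z ^ 2 / (2 * ((n : ℂ) + 1))) := by
    rw [logBarnesFactor]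
    push_cast
    ring
  rw [this, exp_add, exp_nat_mul, exp_log hz, barnesFactor]

theorem summable_logBarnesFactor (z : ℂ) : Summable (logBarnesFactor z) := by
  have hw : Tendsto (fun n : ℕ => z / ((n : ℂ) + 1)) atTop (𝓝 0) :=
    (tendsto_const_div_atTop_nhds_zero_nat z).comp (tendsto_add_atTop_nat 1) |>.congr
      fun n => by simp
  -- `logBarnesFactor z n = (n + 1) (log (1 + w) - w + w² / 2)` with `w = z / (n + 1)`
  have hO := (isBigO_refl (fun n : ℕ => (n : ℂ) + 1) atTop).mul
    ((log_sub_logTaylor_isBigO 2).comp_tendsto hw)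
  have hsum : Summable (fun n : ℕ => ‖z‖ ^ 3 * (1 / ((n : ℝ) + 1) ^ 2)) := by
    refine Summable.mul_left _ ?_
    simpa using (summable_nat_add_iff 1).mpr
      ((Real.summable_one_div_nat_pow (p := 2)).mpr one_lt_two)
  refine summable_of_isBigO_nat hsum (hO.congr_left (fun n => ?_) |>.trans
    (isBigO_of_le _ fun n => le_of_eq ?_))
  · have hn : (n : ℂ) + 1 ≠ 0 := Nat.cast_add_one_ne_zero n
    simp only [Function.comp_apply, logTaylor, Finset.sum_range_succ, Finset.sum_range_zero,
      logBarnesFactor]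
    field_simp
    ring
  · have hn : (0 : ℝ) < n + 1 := n.cast_add_one_pos
    rw [Function.comp_apply, norm_mul, norm_pow, norm_div, Real.norm_of_nonneg (by positivity),
      ← Nat.cast_add_one, Complex.norm_natCast, Nat.cast_add_one, div_pow]
    field_simp

theorem hasProd_barnesFactor {z : ℂ} (hz : -1 < z.re) :
    HasProd (barnesFactor z) (exp (∑' n, logBarnesFactor z n)) :=
  (summable_logBarnesFactor z).hasSum.cexp.congr_fun fun n =>
    (exp_logBarnesFactor (one_add_div_natCast_add_one_ne_zero hz n)).symm

theorem barnesG_one_add (z : ℂ) :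
    barnesG (1 + z) = (2 * Real.pi : ℂ) ^ (z / 2) *
      exp (-(((1 + (Real.eulerMascheroniConstant : ℂ)) * z ^ 2 + z) / 2)) *
      ∏' n, barnesFactor z n := by
  simp only [barnesG, add_sub_cancel_left, barnesFactor]

theorem prod_range_barnesFactor (z : ℂ) (N : ℕ) :
    ∏ n ∈ Finset.range N, barnesFactor z n =
      (∏ n ∈ Finset.Icc 1 N, (1 + z / n) ^ n) * exp (-(z * N) + z ^ 2 / 2 * (harmonic N : ℂ)) := by
  simp only [barnesFactor, Finset.prod_mul_distrib, ← exp_sum, Finset.sum_add_distrib,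
    Finset.sum_const, Finset.card_range, harmonic]
  congr 1
  · rw [← Finset.Ico_add_one_right_eq_Icc, Finset.prod_Ico_eq_prod_range]
    refine Finset.prod_congr rfl fun n _ => ?_
    push_cast
    rw [add_comm 1 (n : ℂ), add_comm 1 n]
  · push_cast
    rw [nsmul_eq_mul, mul_comm (N : ℂ), neg_mul, Finset.mul_sum]
    congr 2
    refine Finset.sum_congr rfl fun n _ => ?_
    field_simp

theorem natCast_cpow_mul_exp_mul_inv_prod_eq (z : ℂ) {N : ℕ} (hN : N ≠ 0) :
    (N : ℂ) ^ (-(z ^ 2) / 2) * exp (z * N) * (∏ n ∈ Finset.Icc 1 N, (1 + z / n) ^ n)⁻¹ =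
      exp (z ^ 2 / 2 * ((harmonic N - Real.log N : ℝ) : ℂ)) *
        (∏ n ∈ Finset.range N, barnesFactor z n)⁻¹ := by
  push_cast
  rw [prod_range_barnesFactor, mul_inv, ← exp_neg, cpow_def_of_ne_zero (Nat.cast_ne_zero.mpr hN),
    ← exp_add, ← mul_assoc, mul_right_comm (exp _), ← exp_add]
  congr 2
  ring

theorem ofReal_sqrt_exp_one_div_two_pi_cpow_mul (z : ℂ) :
    (Real.sqrt (Real.exp 1 / (2 * Real.pi)) : ℂ) ^ z * (2 * Real.pi : ℂ) ^ (z / 2) =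
      exp (z / 2) := by
  have hπ : (0 : ℝ) < 2 * Real.pi := by positivity
  have hA : (0 : ℝ) < Real.sqrt (Real.exp 1 / (2 * Real.pi)) := by positivity
  rw [cpow_def_of_ne_zero (by exact_mod_cast hA.ne'), ← ofReal_log hA.le,
    Real.log_sqrt (by positivity), Real.log_div (Real.exp_ne_zero 1) hπ.ne', Real.log_exp,
    show (2 * Real.pi : ℂ) = ((2 * Real.pi : ℝ) : ℂ) by push_cast; rfl,
    cpow_def_of_ne_zero (by exact_mod_cast hπ.ne'), ← ofReal_log hπ.le, ← exp_add]
  push_cast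
  ring_nf

end Complex

/-- For every complex `z` with `Re z > −1`,
`lim_{N→∞} N^{−z²/2} · e^{zN} · ∏_{n=1}^N (1 + z/n)^{−n} = (A^z · exp(z²/2) · G(1+z))⁻¹`,
where `A = √(e/(2π))`. -/
theorem stmt1 (z : ℂ) (hz : -1 < z.re) :
    Tendsto (fun N : ℕ =>
        (N : ℂ) ^ (-(z ^ 2) / 2) * Complex.exp (z * N) *
          (∏ n ∈ Finset.Icc 1 N, (1 + z / n) ^ n)⁻¹)
      atTop
      (𝓝 (((Real.sqrt (Real.exp 1 / (2 * Real.pi)) : ℂ) ^ z *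
        Complex.exp (z ^ 2 / 2) * barnesG (1 + z))⁻¹)) := by
  have hprod := hasProd_barnesFactor hz
  have hvalue : ((Real.sqrt (Real.exp 1 / (2 * Real.pi)) : ℂ) ^ z *
      exp (z ^ 2 / 2) * barnesG (1 + z))⁻¹ =
        exp (z ^ 2 / 2 * Real.eulerMascheroniConstant) * (exp (∑' n, logBarnesFactor z n))⁻¹ := by
    rw [barnesG_one_add, hprod.tprod_eq, mul_right_comm _ (exp _), ← mul_assoc, ← mul_assoc,
      ofReal_sqrt_exp_one_div_two_pi_cpow_mul]
    simp only [← exp_add]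
    rw [← exp_neg, ← exp_neg, ← exp_add]
    congr 1
    ring
  rw [hvalue]
  refine Tendsto.congr' ((eventually_ne_atTop 0).mono fun N hN =>
    (natCast_cpow_mul_exp_mul_inv_prod_eq z hN).symm) ?_
  exact ((continuous_exp.tendsto _).comp (((continuous_ofReal.tendsto _).comp
    Real.tendsto_harmonic_sub_log).const_mul _)).mul (hprod.tendsto_prod_nat.inv₀ (exp_ne_zero _))
end

section
/- For every complex λ with Re(λ) > −1, lim_{N→∞} N^{−λ²/2} · (∏_{j=1}^N Γ(j+λ)/Γ(j)) · exp(−λ Σ_{j=1}^N ψ(j)) = (A^λ · G(1+λ))^{−1}, where A = √(e/(2π)) and ψ = Γ'/Γ is the digamma function. -/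
open Filter Topology

/-- The digamma function `ψ = Γ'/Γ` on the reals. -/
noncomputable def digamma (x : ℝ) : ℝ := deriv Real.Gamma x / Real.Gamma x

/-!
Put `z_k = λ/(k+1)` and `h_k = log (1 + z_k) - z_k`. Weierstrass' product
`Γ(1+λ) = exp (-γλ - ∑ h_k)` together with `ψ(n+1) = H_n - γ` shows that the `n`-th factor
`Γ(n+1+λ)/Γ(n+1) · exp (-λ ψ(n+1))` is `exp (-R_n)`, where `R_n = ∑_{k ≥ n} h_k`.
Summation by parts gives `∑_{n<N} R_n = ∑_{k<N} (k+1) h_k + N R_N`, and `(k+1) h_k` is the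
logarithm of the `k`-th factor of the Barnes product minus `λ²/(2(k+1))`. Finally
`(k+1)² h_k → -λ²/2` forces `N R_N → -λ²/2`, and `H_N - log N → γ` absorbs `N^{-λ²/2}`.
-/

open Finset

section TailAsymptotics

variable {E : Type*} [NormedAddCommGroup E]

theorem Asymptotics.IsLittleO.tsum_nat_add {v : ℕ → E} {b : ℕ → ℝ} (hb0 : ∀ k, 0 ≤ b k)
    (hb : Summable b) (hv : v =o[atTop] b) :
    (fun N => ∑' k, v (k + N)) =o[atTop] fun N => ∑' k, b (k + N) := by
  refine Asymptotics.IsLittleO.of_bound fun ε hε => ?_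
  obtain ⟨K, hK⟩ := eventually_atTop.1 (hv.bound hε)
  filter_upwards [eventually_ge_atTop K] with N hN
  have hvN : Summable fun k => ‖v (k + N)‖ :=
    (summable_nat_add_iff N).2 (summable_of_isBigO_nat hb hv.isBigO.norm_left)
  calc ‖∑' k, v (k + N)‖ ≤ ∑' k, ‖v (k + N)‖ := norm_tsum_le_tsum_norm hvN
    _ ≤ ∑' k, ε * b (k + N) :=
      hvN.tsum_le_tsum (fun k => (hK _ (by omega)).trans_eq (by rw [Real.norm_of_nonneg (hb0 _)]))
        (((summable_nat_add_iff N).2 hb).mul_left ε)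
    _ = ε * ‖∑' k, b (k + N)‖ := by
      rw [tsum_mul_left, Real.norm_of_nonneg (tsum_nonneg fun k => hb0 _)]

theorem hasSum_inv_mul_add_one_add_two (N : ℕ) :
    HasSum (fun k : ℕ => ((((k + N : ℕ) : ℝ) + 1) * (((k + N : ℕ) : ℝ) + 2))⁻¹)
      ((N : ℝ) + 1)⁻¹ := by
  set u : ℕ → ℝ := fun k => (((k + N : ℕ) : ℝ) + 1)⁻¹
  have hu : Tendsto u atTop (𝓝 0) :=
    tendsto_inv_atTop_zero.comp <| tendsto_atTop_add_const_right _ 1 <|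
      tendsto_natCast_atTop_atTop.comp (tendsto_add_atTop_nat N)
  have htel : ∀ k : ℕ, ((((k + N : ℕ) : ℝ) + 1) * (((k + N : ℕ) : ℝ) + 2))⁻¹ = u k - u (k + 1) := by
    intro k
    simp only [u]
    push_cast
    field_simp
    ring
  rw [funext htel, hasSum_iff_tendsto_nat_of_nonneg (fun k => by rw [← htel]; positivity)]
  simp_rw [sum_range_sub']
  simpa [u] using tendsto_const_nhds.sub hu

variable [NormedSpace ℝ E]

theorem isLittleO_sub_smul_of_tendsto_sq_smul {a : ℕ → E} {c : E}
    (ha : Tendsto (fun k : ℕ => ((k : ℝ) + 1) ^ 2 • a k) atTop (𝓝 c)) :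
    (fun k : ℕ => a k - (((k : ℝ) + 1) * ((k : ℝ) + 2))⁻¹ • c) =o[atTop]
      fun k : ℕ => (((k : ℝ) + 1) * ((k : ℝ) + 2))⁻¹ := by
  have hinv : Tendsto (fun k : ℕ => ((k : ℝ) + 1)⁻¹) atTop (𝓝 0) :=
    tendsto_inv_atTop_zero.comp <| tendsto_atTop_add_const_right _ 1 tendsto_natCast_atTop_atTop
  have hu : Tendsto (fun k : ℕ => (((k : ℝ) + 1) * ((k : ℝ) + 2)) • a k - c) atTop (𝓝 0) := by
    have h := (ha.add (hinv.smul ha)).sub_const c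
    rw [zero_smul, add_zero, sub_self] at h
    refine h.congr fun k => ?_
    have hk : (k : ℝ) + 1 ≠ 0 := by positivity
    rw [smul_smul, ← add_smul]
    congr 2
    field_simp
    ring
  refine ((Asymptotics.isBigO_refl (fun k : ℕ => (((k : ℝ) + 1) * ((k : ℝ) + 2))⁻¹) atTop)
    |>.smul_isLittleO
    ((Asymptotics.isLittleO_one_iff ℝ).2 hu)).congr (fun k => ?_) fun k => by simp
  have hk : ((k : ℝ) + 1) * ((k : ℝ) + 2) ≠ 0 := by positivity
  simp only [smul_sub, smul_smul, inv_mul_cancel₀ hk, one_smul]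

variable [CompleteSpace E]

theorem summable_of_tendsto_sq_smul {a : ℕ → E} {c : E}
    (ha : Tendsto (fun k : ℕ => ((k : ℝ) + 1) ^ 2 • a k) atTop (𝓝 c)) : Summable a := by
  have hb := (hasSum_inv_mul_add_one_add_two 0).summable
  simp only [add_zero] at hb
  simpa using (summable_of_isBigO_nat hb (isLittleO_sub_smul_of_tendsto_sq_smul ha).isBigO).add
    (hb.smul_const c)

theorem tendsto_natCast_smul_tsum_nat_add {a : ℕ → E} {c : E}
    (ha : Tendsto (fun k : ℕ => ((k : ℝ) + 1) ^ 2 • a k) atTop (𝓝 c)) :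
    Tendsto (fun N : ℕ => (N : ℝ) • ∑' k, a (k + N)) atTop (𝓝 c) := by
  -- Compare `a` with `b • c`, whose tails telescope to `(N + 1)⁻¹ • c`.
  set b : ℕ → ℝ := fun k => (((k : ℝ) + 1) * ((k : ℝ) + 2))⁻¹
  have hb : Summable b := by
    simpa only [add_zero] using (hasSum_inv_mul_add_one_add_two 0).summable
  have hbN : ∀ N : ℕ, ∑' k, b (k + N) = ((N : ℝ) + 1)⁻¹ := fun N => by
    simpa [b] using (hasSum_inv_mul_add_one_add_two N).tsum_eq
  have hv := isLittleO_sub_smul_of_tendsto_sq_smul ha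
  have hvs : Summable fun k => a k - b k • c := summable_of_isBigO_nat hb hv.isBigO
  have htail :
      (fun N => ∑' k, (a (k + N) - b (k + N) • c)) =o[atTop] fun N : ℕ => ((N : ℝ) + 1)⁻¹ :=
    (hv.tsum_nat_add (fun k => by positivity) hb).congr_right hbN
  have hN : (fun N : ℕ => (N : ℝ)) =O[atTop] fun N : ℕ => (N : ℝ) + 1 :=
    Asymptotics.isBigO_of_le _ fun N => by
      rw [Real.norm_natCast, Real.norm_of_nonneg (by positivity)]
      linarith
  have h0 : Tendsto (fun N : ℕ => (N : ℝ) • ∑' k, (a (k + N) - b (k + N) • c)) atTop (𝓝 0) := by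
    refine (Asymptotics.isLittleO_one_iff ℝ).1 ((hN.smul_isLittleO htail).congr_right fun N => ?_)
    have : (N : ℝ) + 1 ≠ 0 := by positivity
    simp [this]
  have h1 : Tendsto (fun N : ℕ => ((N : ℝ) / ((N : ℝ) + 1)) • c) atTop (𝓝 c) := by
    simpa using (tendsto_natCast_div_add_atTop (1 : ℝ)).smul_const c
  refine (zero_add c ▸ h0.add h1).congr fun N => ?_
  have hbs : Summable fun k => b (k + N) := (summable_nat_add_iff (f := b) N).2 hb
  have hsplit : ∑' k, a (k + N) = ∑' k, (a (k + N) - b (k + N) • c) + ((N : ℝ) + 1)⁻¹ • c := by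
    rw [← hbN, ← hbs.tsum_smul_const, ← Summable.tsum_add
      ((summable_nat_add_iff (f := fun k => a k - b k • c) N).2 hvs) (hbs.smul_const c)]
    simp
  rw [hsplit, smul_add, smul_smul, div_eq_mul_inv]

end TailAsymptotics

theorem sum_range_tsum_nat_add {G : Type*} [AddCommGroup G] [TopologicalSpace G]
    [IsTopologicalAddGroup G] [T2Space G] {f : ℕ → G} (hf : Summable f) (N : ℕ) :
    ∑ n ∈ range N, ∑' k, f (k + n) = ∑ k ∈ range N, (k + 1) • f k + N • ∑' k, f (k + N) := by
  induction N with
  | zero => simp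
  | succ N ih =>
    have hshift : ∑' k, f (k + N) = f N + ∑' k, f (k + (N + 1)) := by
      rw [((summable_nat_add_iff N).2 hf).tsum_eq_zero_add]
      simp only [zero_add, add_right_comm _ 1 N, add_assoc]
    rw [sum_range_succ, ih, sum_range_succ, hshift]
    simp only [smul_add, succ_nsmul]
    abel

theorem Complex.norm_log_one_add_sub_self_add_sq_div_two_le {w : ℂ} (hw : ‖w‖ ≤ 1 / 2) :
    ‖log (1 + w) - w + w ^ 2 / 2‖ ≤ ‖w‖ ^ 3 := by
  have hw1 : ‖w‖ < 1 := hw.trans_lt (by norm_num)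
  have htaylor : logTaylor 3 w = w - w ^ 2 / 2 := by
    simp [logTaylor, sum_range_succ]
    ring
  have h2 : (1 - ‖w‖)⁻¹ ≤ 2 := by
    rw [inv_le_comm₀ (by linarith) (by norm_num)]
    linarith
  calc ‖log (1 + w) - w + w ^ 2 / 2‖ = ‖log (1 + w) - logTaylor (2 + 1) w‖ := by
        rw [htaylor, sub_sub_eq_add_sub, add_sub_right_comm]
    _ ≤ ‖w‖ ^ (2 + 1) * (1 - ‖w‖)⁻¹ / (2 + 1) := norm_log_sub_logTaylor_le 2 hw1
    _ ≤ ‖w‖ ^ 3 := by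
      have : 0 ≤ ‖w‖ ^ 3 := by positivity
      norm_num
      nlinarith [mul_le_mul_of_nonneg_left h2 this]

section WeierstrassFactors

variable (l : ℂ)

noncomputable def weierstrassLog (k : ℕ) : ℂ := Complex.log (1 + l / (k + 1)) - l / (k + 1)

-- The logarithm of the `k`-th factor of the product defining `barnesG (1 + l)`.
noncomputable def barnesLog (k : ℕ) : ℂ := (k + 1) * weierstrassLog l k + l ^ 2 / (2 * (k + 1))

theorem Complex.norm_natCast_add_one (k : ℕ) : ‖(k : ℂ) + 1‖ = (k : ℝ) + 1 := by
  exact_mod_cast Complex.norm_natCast (k + 1)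

theorem norm_div_natCast_add_one (k : ℕ) : ‖l / (k + 1)‖ = ‖l‖ / ((k : ℝ) + 1) := by
  rw [norm_div, Complex.norm_natCast_add_one]

theorem eventually_norm_weierstrassLog_add_le :
    ∀ᶠ k : ℕ in atTop,
      ‖weierstrassLog l k + (l / (k + 1)) ^ 2 / 2‖ ≤ ‖l‖ ^ 3 / ((k : ℝ) + 1) ^ 3 := by
  obtain ⟨M, hM⟩ := exists_nat_ge (2 * ‖l‖)
  filter_upwards [eventually_ge_atTop M] with k hk
  have hsmall : ‖l / (k + 1)‖ ≤ 1 / 2 := by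
    rw [norm_div_natCast_add_one, div_le_iff₀ (by positivity)]
    have : (M : ℝ) ≤ k := by exact_mod_cast hk
    linarith
  have hlog := Complex.norm_log_one_add_sub_self_add_sq_div_two_le hsmall
  rw [norm_div_natCast_add_one] at hlog
  rwa [weierstrassLog, ← div_pow]

theorem tendsto_sq_smul_weierstrassLog :
    Tendsto (fun k : ℕ => ((k : ℝ) + 1) ^ 2 • weierstrassLog l k) atTop (𝓝 (-(l ^ 2 / 2))) := by
  have hbound : Tendsto (fun k : ℕ => ‖l‖ ^ 3 * (1 / ((k : ℝ) + 1))) atTop (𝓝 0) := by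
    simpa using tendsto_one_div_add_atTop_nhds_zero_nat.const_mul (‖l‖ ^ 3)
  have hsmall : Tendsto
      (fun k : ℕ => ((k : ℝ) + 1) ^ 2 • (weierstrassLog l k + (l / (k + 1)) ^ 2 / 2))
      atTop (𝓝 0) := by
    refine squeeze_zero_norm' ?_ hbound
    filter_upwards [eventually_norm_weierstrassLog_add_le l] with k hk
    rw [norm_smul, Real.norm_of_nonneg (by positivity)]
    calc ((k : ℝ) + 1) ^ 2 * ‖weierstrassLog l k + (l / (k + 1)) ^ 2 / 2‖
        ≤ ((k : ℝ) + 1) ^ 2 * (‖l‖ ^ 3 / ((k : ℝ) + 1) ^ 3) := by gcongr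
      _ = ‖l‖ ^ 3 * (1 / ((k : ℝ) + 1)) := by field_simp
  refine (zero_sub (l ^ 2 / 2) ▸ hsmall.sub_const (l ^ 2 / 2)).congr fun k => ?_
  have hk : (k : ℂ) + 1 ≠ 0 := Nat.cast_add_one_ne_zero k
  rw [smul_add, Complex.real_smul, Complex.real_smul]
  push_cast
  field_simp
  ring

theorem summable_weierstrassLog : Summable (weierstrassLog l) :=
  summable_of_tendsto_sq_smul (tendsto_sq_smul_weierstrassLog l)

theorem summable_barnesLog : Summable (barnesLog l) := by
  have hsum : Summable fun k : ℕ => ‖l‖ ^ 3 / ((k : ℝ) + 1) ^ 2 := by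
    simpa [div_eq_mul_inv] using ((summable_nat_add_iff 1).2
      (Real.summable_one_div_nat_pow.2 one_lt_two)).mul_left (‖l‖ ^ 3)
  refine summable_of_isBigO_nat hsum (Asymptotics.IsBigO.of_bound 1 ?_)
  filter_upwards [eventually_norm_weierstrassLog_add_le l] with k hk
  have hk1 : (k : ℂ) + 1 ≠ 0 := Nat.cast_add_one_ne_zero k
  have hfactor : barnesLog l k = (k + 1) * (weierstrassLog l k + (l / (k + 1)) ^ 2 / 2) := by
    rw [barnesLog]
    field_simp
  rw [hfactor, norm_mul, Complex.norm_natCast_add_one, one_mul, Real.norm_of_nonneg (by positivity)]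
  calc ((k : ℝ) + 1) * ‖weierstrassLog l k + (l / (k + 1)) ^ 2 / 2‖
      ≤ ((k : ℝ) + 1) * (‖l‖ ^ 3 / ((k : ℝ) + 1) ^ 3) := by gcongr
    _ = ‖l‖ ^ 3 / ((k : ℝ) + 1) ^ 2 := by field_simp

end WeierstrassFactors

section Gamma

variable {l : ℂ}

theorem one_add_div_natCast_add_one_ne_zero (hl : ∀ k : ℕ, (k : ℂ) + 1 + l ≠ 0) (k : ℕ) :
    1 + l / (k + 1) ≠ 0 := by
  rw [one_add_div (Nat.cast_add_one_ne_zero k)]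
  exact div_ne_zero (hl k) (Nat.cast_add_one_ne_zero k)

theorem prod_one_add_div_eq_exp (hl : ∀ k : ℕ, (k : ℂ) + 1 + l ≠ 0) (n : ℕ) :
    ∏ k ∈ range n, (1 + l / (k + 1)) =
      Complex.exp (l * harmonic n + ∑ k ∈ range n, weierstrassLog l k) := by
  have hH : l * (harmonic n : ℂ) = ∑ k ∈ range n, l / (k + 1) := by
    simp [harmonic, mul_sum, div_eq_mul_inv]
  rw [hH, ← sum_add_distrib, Complex.exp_sum]
  refine prod_congr rfl fun k _ => ?_
  rw [weierstrassLog, add_sub_cancel, Complex.exp_log (one_add_div_natCast_add_one_ne_zero hl k)]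

theorem GammaSeq_one_add_eq (hl : ∀ k : ℕ, (k : ℂ) + 1 + l ≠ 0) {n : ℕ} (hn : n ≠ 0) :
    Complex.GammaSeq (1 + l) n =
      n / (n + (1 + l)) * ((n : ℂ) ^ l / ∏ k ∈ range n, (1 + l / (k + 1))) := by
  have hn' : (n : ℂ) ≠ 0 := Nat.cast_ne_zero.2 hn
  have hfact : ∏ k ∈ range n, ((k : ℂ) + 1) = n.factorial := by
    rw [← prod_range_add_one_eq_factorial n]
    push_cast
    rfl
  have hprod : ∏ j ∈ range (n + 1), (1 + l + j) =
      n.factorial * (∏ k ∈ range n, (1 + l / (k + 1))) * (n + (1 + l)) := by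
    rw [prod_range_succ, ← hfact, ← prod_mul_distrib]
    congr 1
    · refine prod_congr rfl fun k _ => ?_
      have := Nat.cast_add_one_ne_zero (R := ℂ) k
      field_simp
      ring
    · ring
  have hP : ∏ k ∈ range n, (1 + l / (k + 1)) ≠ 0 :=
    prod_ne_zero_iff.2 fun k _ => one_add_div_natCast_add_one_ne_zero hl k
  have hlast : (n : ℂ) + (1 + l) ≠ 0 := by simpa [add_assoc] using hl n
  rw [Complex.GammaSeq, hprod, Complex.cpow_add _ _ hn', Complex.cpow_one]
  have hfact0 : (n.factorial : ℂ) ≠ 0 := Nat.cast_ne_zero.2 n.factorial_ne_zero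
  generalize ∏ k ∈ range n, (1 + l / (k + 1)) = P at hP ⊢
  field_simp

theorem tendsto_cpow_div_prod_one_add_div (hl : ∀ k : ℕ, (k : ℂ) + 1 + l ≠ 0) :
    Tendsto (fun n : ℕ => (n : ℂ) ^ l / ∏ k ∈ range n, (1 + l / (k + 1))) atTop
      (𝓝 (Complex.Gamma (1 + l))) := by
  have h := (Complex.GammaSeq_tendsto_Gamma (1 + l)).div
    (tendsto_natCast_div_add_atTop (1 + l)) one_ne_zero
  rw [div_one] at h
  refine h.congr' ?_
  filter_upwards [eventually_ne_atTop 0] with n hn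
  have hlast : (n : ℂ) + (1 + l) ≠ 0 := by simpa [add_assoc] using hl n
  rw [Pi.div_apply, GammaSeq_one_add_eq hl hn]
  field_simp

theorem Gamma_one_add_eq_exp (hl : ∀ k : ℕ, (k : ℂ) + 1 + l ≠ 0) :
    Complex.Gamma (1 + l) =
      Complex.exp (-(Real.eulerMascheroniConstant * l) - ∑' k, weierstrassLog l k) := by
  refine tendsto_nhds_unique (tendsto_cpow_div_prod_one_add_div hl) ?_
  have hγ : Tendsto (fun n : ℕ => ((harmonic n - Real.log n : ℝ) : ℂ)) atTop
      (𝓝 (Real.eulerMascheroniConstant : ℂ)) :=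
    (Complex.continuous_ofReal.tendsto _).comp Real.tendsto_harmonic_sub_log
  have hexp := (Complex.continuous_exp.tendsto _).comp
    ((hγ.mul_const l).neg.sub (summable_weierstrassLog l).hasSum.tendsto_sum_nat)
  refine hexp.congr' ?_
  filter_upwards [eventually_ne_atTop 0] with n hn
  rw [Function.comp_apply, prod_one_add_div_eq_exp hl, Complex.cpow_def_of_ne_zero
    (Nat.cast_ne_zero.2 hn), ← Complex.natCast_log, ← Complex.exp_sub]
  congr 1
  push_cast
  ring

theorem Gamma_natCast_add_one_add_div (hl : ∀ k : ℕ, (k : ℂ) + 1 + l ≠ 0) (n : ℕ) :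
    Complex.Gamma (n + 1 + l) / Complex.Gamma (n + 1) =
      Complex.Gamma (1 + l) * ∏ k ∈ range n, (1 + l / (k + 1)) := by
  induction n with
  | zero => simp
  | succ n ih =>
    have hn := Nat.cast_add_one_ne_zero (R := ℂ) n
    push_cast
    rw [add_right_comm _ 1 l, Complex.Gamma_add_one _ (hl n), Complex.Gamma_add_one _ hn,
      mul_div_mul_comm, ih, prod_range_succ]
    field_simp

theorem digamma_natCast_add_one (n : ℕ) :
    digamma (n + 1) = harmonic n - Real.eulerMascheroniConstant := by
  rw [digamma, Real.deriv_Gamma_nat, Real.Gamma_nat_eq_factorial]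
  have := Nat.cast_ne_zero (R := ℝ) |>.2 (Nat.factorial_ne_zero n)
  field_simp
  ring

theorem Gamma_div_mul_exp_digamma (hl : ∀ k : ℕ, (k : ℂ) + 1 + l ≠ 0) (n : ℕ) :
    Complex.Gamma (n + 1 + l) / Complex.Gamma (n + 1) * Complex.exp (-l * digamma (n + 1)) =
      Complex.exp (-∑' k, weierstrassLog l (k + n)) := by
  rw [Gamma_natCast_add_one_add_div hl, Gamma_one_add_eq_exp hl, prod_one_add_div_eq_exp hl,
    digamma_natCast_add_one, ← Complex.exp_add, ← Complex.exp_add,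
    ← (summable_weierstrassLog l).sum_add_tsum_nat_add n]
  congr 1
  push_cast
  ring

end Gamma

theorem prod_Icc_one_eq_prod_range {M : Type*} [CommMonoid M] (f : ℕ → M) (N : ℕ) :
    ∏ j ∈ Icc 1 N, f j = ∏ n ∈ range N, f (n + 1) := by
  rw [range_eq_Ico, prod_Ico_add', zero_add, Ico_add_one_right_eq_Icc]

section Assembly

variable {l : ℂ}

theorem prod_Icc_Gamma_div_mul_exp_sum_digamma (hl : ∀ k : ℕ, (k : ℂ) + 1 + l ≠ 0) (N : ℕ) :
    (∏ j ∈ Icc 1 N, Complex.Gamma (j + l) / Complex.Gamma j) *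
        Complex.exp (-l * ((∑ j ∈ Icc 1 N, digamma j : ℝ) : ℂ)) =
      Complex.exp (-∑ n ∈ range N, ∑' k, weierstrassLog l (k + n)) := by
  rw [Complex.ofReal_sum, mul_sum, Complex.exp_sum, ← prod_mul_distrib, prod_Icc_one_eq_prod_range,
    ← sum_neg_distrib, Complex.exp_sum]
  refine prod_congr rfl fun n _ => ?_
  push_cast
  exact Gamma_div_mul_exp_digamma hl n

theorem sum_range_barnesLog (N : ℕ) :
    ∑ k ∈ range N, barnesLog l k =
      ∑ k ∈ range N, (k + 1) • weierstrassLog l k + l ^ 2 / 2 * harmonic N := by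
  have hterm : ∀ k : ℕ,
      barnesLog l k = (k + 1) • weierstrassLog l k + l ^ 2 / 2 * ((k : ℂ) + 1)⁻¹ := by
    intro k
    have := Nat.cast_add_one_ne_zero (R := ℂ) k
    rw [barnesLog, nsmul_eq_mul]
    push_cast
    field_simp
  simp only [hterm, sum_add_distrib, ← mul_sum, harmonic, Rat.cast_sum, Rat.cast_inv]
  push_cast
  rfl

theorem tendsto_neg_mul_log_sub_sum_tail_weierstrassLog :
    Tendsto (fun N : ℕ => -(l ^ 2 / 2) * Real.log N - ∑ n ∈ range N, ∑' k, weierstrassLog l (k + n))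
      atTop (𝓝 (-((∑' k, barnesLog l k) - (1 + Real.eulerMascheroniConstant) * (l ^ 2 / 2)))) := by
  have hS := (summable_barnesLog l).hasSum.tendsto_sum_nat
  have hγ : Tendsto (fun N : ℕ => ((harmonic N - Real.log N : ℝ) : ℂ)) atTop
      (𝓝 (Real.eulerMascheroniConstant : ℂ)) :=
    (Complex.continuous_ofReal.tendsto _).comp Real.tendsto_harmonic_sub_log
  have htail : Tendsto (fun N : ℕ => (N : ℂ) * ∑' k, weierstrassLog l (k + N)) atTop
      (𝓝 (-(l ^ 2 / 2))) := by
    simpa [Complex.real_smul] using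
      tendsto_natCast_smul_tsum_nat_add (tendsto_sq_smul_weierstrassLog l)
  have hlim := (hS.neg.add (hγ.mul_const (l ^ 2 / 2))).sub htail
  convert hlim using 1
  · funext N
    rw [sum_range_tsum_nat_add (summable_weierstrassLog l), sum_range_barnesLog, nsmul_eq_mul]
    push_cast
    ring
  · congr 1
    ring

theorem hasProd_barnes_factor (hl : ∀ k : ℕ, (k : ℂ) + 1 + l ≠ 0) :
    HasProd (fun n : ℕ => (1 + l / (n + 1)) ^ (n + 1) * Complex.exp (-l + l ^ 2 / (2 * (n + 1))))
      (Complex.exp (∑' k, barnesLog l k)) := by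
  refine (summable_barnesLog l).hasSum.cexp.congr_fun fun k => ?_
  have hk := Nat.cast_add_one_ne_zero (R := ℂ) k
  have hsplit : barnesLog l k =
      ((k + 1 : ℕ) : ℂ) * Complex.log (1 + l / (k + 1)) + (-l + l ^ 2 / (2 * (k + 1))) := by
    rw [barnesLog, weierstrassLog]
    push_cast
    field_simp
    ring
  rw [Function.comp_apply, hsplit, Complex.exp_add (_ * _), Complex.exp_nat_mul,
    Complex.exp_log (one_add_div_natCast_add_one_ne_zero hl k)]

theorem sqrt_cpow_mul_barnesG_one_add (hl : ∀ k : ℕ, (k : ℂ) + 1 + l ≠ 0) :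
    (Real.sqrt (Real.exp 1 / (2 * Real.pi)) : ℂ) ^ l * barnesG (1 + l) =
      Complex.exp ((∑' k, barnesLog l k) - (1 + Real.eulerMascheroniConstant) * (l ^ 2 / 2)) := by
  have hpi : (0 : ℝ) < 2 * Real.pi := by positivity
  have hA : ((Real.sqrt (Real.exp 1 / (2 * Real.pi)) : ℝ) : ℂ) ^ l =
      Complex.exp (((1 - Real.log (2 * Real.pi)) / 2 : ℝ) * l) := by
    rw [Complex.cpow_def_of_ne_zero
        (Complex.ofReal_ne_zero.2 (Real.sqrt_pos.2 (by positivity)).ne'),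
      ← Complex.ofReal_log (Real.sqrt_nonneg _), Real.log_sqrt (by positivity),
      Real.log_div (Real.exp_ne_zero 1) hpi.ne', Real.log_exp]
  have h2 : (2 * Real.pi : ℂ) ^ (l / 2) = Complex.exp (Real.log (2 * Real.pi) * (l / 2)) := by
    rw [Complex.cpow_def_of_ne_zero (by exact_mod_cast hpi.ne'), Complex.ofReal_log hpi.le]
    push_cast
    rfl
  rw [barnesG, add_sub_cancel_left, (hasProd_barnes_factor hl).tprod_eq, hA, h2,
    ← Complex.exp_add, ← Complex.exp_add, ← Complex.exp_add]
  congr 1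
  push_cast
  ring

end Assembly

/-- For every complex `λ` with `Re λ > −1`,
`lim_{N→∞} N^{−λ²/2} · (∏_{j=1}^N Γ(j+λ)/Γ(j)) · exp(−λ ∑_{j=1}^N ψ(j))
  = (A^λ · G(1+λ))⁻¹`, where `A = √(e/(2π))` and `ψ = Γ'/Γ` is the digamma function. -/
theorem stmt5 (l : ℂ) (hl : -1 < l.re) :
    Tendsto (fun N : ℕ =>
        (N : ℂ) ^ (-(l ^ 2) / 2) *
          (∏ j ∈ Finset.Icc 1 N, Complex.Gamma (j + l) / Complex.Gamma j) *
          Complex.exp (-l * ((∑ j ∈ Finset.Icc 1 N, digamma j : ℝ) : ℂ)))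
      atTop
      (𝓝 (((Real.sqrt (Real.exp 1 / (2 * Real.pi)) : ℂ) ^ l * barnesG (1 + l))⁻¹)) := by
  have hl' : ∀ k : ℕ, (k : ℂ) + 1 + l ≠ 0 := fun k h => by
    have hre := congrArg Complex.re h
    simp only [Complex.add_re, Complex.natCast_re, Complex.one_re, Complex.zero_re] at hre
    linarith [(k.cast_nonneg : (0 : ℝ) ≤ k)]
  rw [sqrt_cpow_mul_barnesG_one_add hl', ← Complex.exp_neg]
  refine ((Complex.continuous_exp.tendsto _).comp
    tendsto_neg_mul_log_sub_sum_tail_weierstrassLog).congr' ?_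
  filter_upwards [eventually_ne_atTop 0] with N hN
  rw [Function.comp_apply, mul_assoc, prod_Icc_Gamma_div_mul_exp_sum_digamma hl',
    Complex.cpow_def_of_ne_zero (Nat.cast_ne_zero.2 hN), ← Complex.natCast_log, ← Complex.exp_add]
  ring_nf
end

section
/- lim_{N→∞} [ ∫_0^∞ (u e^{−u} / (1 − e^{−u})²) (1 − e^{−Nu}) du − log N ] = 1 + γ, where γ is the Euler–Mascheroni constant. Equivalently, ∫_0^∞ (u e^{−u} / (1 − e^{−u})²) (1 − e^{−Nu}) du = log N + (1+γ) + o(1) as N → ∞. -/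
/-!
Expanding `e^{-u} / (1 - e^{-u})^2 = ∑_{k ≥ 1} k e^{-ku}` and integrating term by term (the terms
are nonnegative) gives `∑_{k ≥ 1} (1/k - k/(k+N)^2)`. Since
`1/k - k/(k+N)^2 = (1/k - 1/(k+N)) + N/(k+N)^2`, this is `H_N + N ∑_{k > N} 1/k^2`.
Now `H_N - log N → γ`, while comparing `1/k^2` with `1/(k-1) - 1/k` and with `1/k - 1/(k+1)`
squeezes `N ∑_{k > N} 1/k^2` between `N/(N+1)` and `1`.
-/

open Filter Topology MeasureTheory Set Real

lemma hasSum_sub_succ_of_antitone {f : ℕ → ℝ} (hf : Antitone f)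
    (hlim : Tendsto f atTop (𝓝 0)) : HasSum (fun k => f k - f (k + 1)) (f 0) := by
  refine (hasSum_iff_tendsto_nat_of_nonneg (fun k => sub_nonneg.2 (hf k.le_succ)) _).2 ?_
  simp_rw [Finset.sum_range_sub']
  simpa using tendsto_const_nhds.sub hlim

lemma tendsto_one_div_add_natCast_atTop (c : ℝ) :
    Tendsto (fun k : ℕ => 1 / (c + k)) atTop (𝓝 0) := by
  simpa [Pi.inv_def] using
    (tendsto_atTop_add_const_left _ c tendsto_natCast_atTop_atTop).inv_tendsto_atTop

lemma hasSum_one_div_add_sub_one_div_add_add_one {c : ℝ} (hc : 0 < c) :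
    HasSum (fun k : ℕ => 1 / (c + k) - 1 / (c + k + 1)) (1 / c) := by
  have hanti : Antitone fun k : ℕ => 1 / (c + k) := fun i j hij =>
    one_div_le_one_div_of_le (by positivity) (by gcongr)
  simpa [add_assoc] using
    hasSum_sub_succ_of_antitone hanti (tendsto_one_div_add_natCast_atTop c)

lemma hasSum_one_div_add_one_sub_one_div_add_one_add (N : ℕ) :
    HasSum (fun k : ℕ => 1 / ((k : ℝ) + 1) - 1 / ((k : ℝ) + 1 + N)) (harmonic N) := by
  set f : ℕ → ℝ := fun k => ∑ j ∈ Finset.range N, 1 / ((j + 1 : ℝ) + k)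
  have hanti : Antitone f := fun a b hab =>
    Finset.sum_le_sum fun j _ => one_div_le_one_div_of_le (by positivity) (by gcongr)
  have hlim : Tendsto f atTop (𝓝 0) := by
    simpa only [Finset.sum_const_zero] using tendsto_finsetSum (Finset.range N) fun j _ =>
      tendsto_one_div_add_natCast_atTop (j + 1 : ℝ)
  have hstep : ∀ k : ℕ, f k - f (k + 1) = 1 / ((k : ℝ) + 1) - 1 / ((k : ℝ) + 1 + N) := by
    intro k
    have := Finset.sum_range_sub' (fun j : ℕ => 1 / ((k : ℝ) + 1 + j)) N
    rw [Nat.cast_zero, add_zero] at this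
    simp only [f, ← Finset.sum_sub_distrib]
    convert this using 2 with j
    push_cast
    ring_nf
  have hf0 : f 0 = harmonic N := by
    simp [f, harmonic]
  rw [← hf0]
  simpa [hstep] using hasSum_sub_succ_of_antitone hanti hlim

lemma one_div_sub_one_div_add_one_le_one_div_sq {y : ℝ} (hy : 0 < y) :
    1 / y - 1 / (y + 1) ≤ 1 / y ^ 2 := by
  rw [div_sub_div _ _ hy.ne' (by positivity), div_le_div_iff₀ (by positivity) (by positivity)]
  nlinarith

lemma one_div_add_one_sq_le_one_div_sub_one_div_add_one {y : ℝ} (hy : 0 < y) :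
    1 / (y + 1) ^ 2 ≤ 1 / y - 1 / (y + 1) := by
  rw [div_sub_div _ _ hy.ne' (by positivity), div_le_div_iff₀ (by positivity) (by positivity)]
  nlinarith

lemma summable_one_div_add_natCast_sq (c : ℝ) : Summable fun k : ℕ => 1 / (c + k) ^ 2 :=
  ((summable_one_div_nat_add_rpow c 2).2 one_lt_two).congr fun k => by
    rw [rpow_two, sq_abs, add_comm]

lemma one_div_le_tsum_one_div_add_natCast_sq {c : ℝ} (hc : 0 < c) :
    1 / c ≤ ∑' k : ℕ, 1 / (c + k) ^ 2 :=
  (hasSum_one_div_add_sub_one_div_add_add_one hc).tsum_eq.symm.le.trans <|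
    Summable.tsum_le_tsum
      (fun k => one_div_sub_one_div_add_one_le_one_div_sq (by positivity))
      (hasSum_one_div_add_sub_one_div_add_add_one hc).summable
      (summable_one_div_add_natCast_sq c)

lemma tsum_one_div_add_one_add_sq_le {x : ℝ} (hx : 0 < x) :
    ∑' k : ℕ, 1 / (x + 1 + k) ^ 2 ≤ 1 / x :=
  (Summable.tsum_le_tsum
      (fun k => by simpa only [add_right_comm] using
        one_div_add_one_sq_le_one_div_sub_one_div_add_one (by positivity : 0 < x + k))
      (summable_one_div_add_natCast_sq (x + 1))
      (hasSum_one_div_add_sub_one_div_add_add_one hx).summable).trans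
    (hasSum_one_div_add_sub_one_div_add_add_one hx).tsum_eq.le

lemma tendsto_mul_tsum_one_div_add_one_add_sq :
    Tendsto (fun x : ℝ => x * ∑' k : ℕ, 1 / (x + 1 + k) ^ 2) atTop (𝓝 1) := by
  have hlower : Tendsto (fun x : ℝ => 1 - 1 / (x + 1)) atTop (𝓝 1) := by
    simpa using tendsto_const_nhds.sub
      (tendsto_inv_atTop_zero.comp (tendsto_atTop_add_const_right _ (1 : ℝ) tendsto_id))
  refine tendsto_of_tendsto_of_tendsto_of_le_of_le' hlower tendsto_const_nhds ?_ ?_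
  · filter_upwards [eventually_gt_atTop 0] with x hx
    calc 1 - 1 / (x + 1) = x * (1 / (x + 1)) := by field_simp; ring
      _ ≤ _ := by gcongr; exact one_div_le_tsum_one_div_add_natCast_sq (by positivity)
  · filter_upwards [eventually_gt_atTop 0] with x hx
    calc x * ∑' k : ℕ, 1 / (x + 1 + k) ^ 2 ≤ x * (1 / x) :=
          mul_le_mul_of_nonneg_left (tsum_one_div_add_one_add_sq_le hx) hx.le
      _ = 1 := by field_simp

lemma integral_mul_exp_neg_mul {r : ℝ} (hr : 0 < r) :
    ∫ u in Ioi (0 : ℝ), u * exp (-(r * u)) = 1 / r ^ 2 := by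
  have h := integral_rpow_mul_exp_neg_mul_Ioi two_pos hr
  rw [Gamma_two, mul_one, show (2 : ℝ) - 1 = 1 by norm_num, rpow_two, one_div_pow] at h
  simpa only [rpow_one] using h

lemma integrableOn_mul_exp_neg_mul {r : ℝ} (hr : 0 < r) :
    IntegrableOn (fun u : ℝ => u * exp (-(r * u))) (Ioi 0) :=
  .of_integral_ne_zero (by rw [integral_mul_exp_neg_mul hr]; positivity)

lemma mul_exp_neg_mul_mul_one_sub_exp (a x u : ℝ) :
    a * (u * exp (-(a * u))) * (1 - exp (-(x * u))) =
      a * (u * exp (-(a * u)) - u * exp (-((a + x) * u))) := by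
  rw [add_mul, neg_add, exp_add]
  ring

lemma mul_exp_neg_mul_mul_one_sub_exp_nonneg {a x u : ℝ} (ha : 0 ≤ a) (hx : 0 ≤ x)
    (hu : 0 ≤ u) : 0 ≤ a * (u * exp (-(a * u))) * (1 - exp (-(x * u))) := by
  have : exp (-(x * u)) ≤ 1 := exp_le_one_iff.2 (by nlinarith)
  have := exp_pos (-(a * u))
  apply mul_nonneg (by positivity)
  linarith

lemma integrableOn_mul_exp_neg_mul_mul_one_sub_exp {a x : ℝ} (ha : 0 < a) (hx : 0 ≤ x) :
    IntegrableOn (fun u => a * (u * exp (-(a * u))) * (1 - exp (-(x * u)))) (Ioi 0) := by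
  simp_rw [mul_exp_neg_mul_mul_one_sub_exp]
  exact ((integrableOn_mul_exp_neg_mul ha).sub
    (integrableOn_mul_exp_neg_mul (by positivity))).const_mul a

lemma integral_mul_exp_neg_mul_mul_one_sub_exp {a x : ℝ} (ha : 0 < a) (hx : 0 ≤ x) :
    ∫ u in Ioi (0 : ℝ), a * (u * exp (-(a * u))) * (1 - exp (-(x * u))) =
      1 / a - a / (a + x) ^ 2 := by
  simp_rw [mul_exp_neg_mul_mul_one_sub_exp]
  rw [integral_const_mul, integral_sub (integrableOn_mul_exp_neg_mul ha)
    (integrableOn_mul_exp_neg_mul (by positivity)), integral_mul_exp_neg_mul ha,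
    integral_mul_exp_neg_mul (by positivity)]
  field_simp

lemma one_div_sub_div_add_sq_nonneg {a x : ℝ} (ha : 0 < a) (hx : 0 ≤ x) :
    0 ≤ 1 / a - a / (a + x) ^ 2 := by
  rw [sub_nonneg, div_le_div_iff₀ (by positivity) ha]
  nlinarith

lemma one_div_sub_div_add_sq_le {a x : ℝ} (ha : 0 < a) (hx : 0 ≤ x) :
    1 / a - a / (a + x) ^ 2 ≤ 2 * x / a ^ 2 := by
  rw [div_sub_div _ _ ha.ne' (by positivity), div_le_div_iff₀ (by positivity) (by positivity)]
  nlinarith [mul_nonneg hx ha.le, mul_nonneg (mul_nonneg hx hx) ha.le,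
    mul_nonneg (mul_nonneg hx hx) hx, mul_nonneg (mul_nonneg hx ha.le) ha.le]

lemma summable_one_div_add_one_sub_div_add_sq {x : ℝ} (hx : 0 ≤ x) :
    Summable fun k : ℕ => 1 / ((k : ℝ) + 1) - ((k : ℝ) + 1) / ((k : ℝ) + 1 + x) ^ 2 := by
  have hsq : Summable fun k : ℕ => 2 * x / ((k : ℝ) + 1) ^ 2 := by
    simpa only [mul_one_div, add_comm (1 : ℝ)] using
      (summable_one_div_add_natCast_sq 1).mul_left (2 * x)
  exact hsq.of_nonneg_of_le (fun k => one_div_sub_div_add_sq_nonneg (by positivity) hx)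
    (fun k => one_div_sub_div_add_sq_le (by positivity) hx)

lemma hasSum_mul_exp_neg_mul {u : ℝ} (hu : 0 < u) :
    HasSum (fun k : ℕ => ((k : ℝ) + 1) * (u * exp (-(((k : ℝ) + 1) * u))))
      (u * exp (-u) / (1 - exp (-u)) ^ 2) := by
  have hr : ‖exp (-u)‖ < 1 := by
    rw [norm_of_nonneg (exp_pos _).le, exp_lt_one_iff]
    linarith
  have hgeom : HasSum (fun k : ℕ => ((k + 1 : ℕ) : ℝ) * exp (-u) ^ (k + 1))
      (exp (-u) / (1 - exp (-u)) ^ 2) := by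
    have hg : HasSum (fun n : ℕ => (n : ℝ) * exp (-u) ^ n) (exp (-u) / (1 - exp (-u)) ^ 2) :=
      hasSum_coe_mul_geometric_of_norm_lt_one hr
    rw [← hasSum_nat_add_iff' 1] at hg
    simpa using hg
  have hterm : ∀ k : ℕ, ((k : ℝ) + 1) * (u * exp (-(((k : ℝ) + 1) * u))) =
      u * (((k + 1 : ℕ) : ℝ) * exp (-u) ^ (k + 1)) := fun k => by
    rw [← exp_nat_mul]
    push_cast
    ring_nf
  simpa only [hterm, mul_div_assoc] using hgeom.mul_left u

lemma integral_mul_exp_neg_div_one_sub_exp_sq_mul_eq_tsum {x : ℝ} (hx : 0 ≤ x) :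
    ∫ u in Ioi (0 : ℝ), u * exp (-u) / (1 - exp (-u)) ^ 2 * (1 - exp (-(x * u))) =
      ∑' k : ℕ, (1 / ((k : ℝ) + 1) - ((k : ℝ) + 1) / ((k : ℝ) + 1 + x) ^ 2) := by
  set F : ℕ → ℝ → ℝ := fun k u =>
    ((k : ℝ) + 1) * (u * exp (-(((k : ℝ) + 1) * u))) * (1 - exp (-(x * u)))
  have hF_int : ∀ k, IntegrableOn (F k) (Ioi 0) := fun k =>
    integrableOn_mul_exp_neg_mul_mul_one_sub_exp (by positivity) hx
  have hF : ∀ k, ∫ u in Ioi (0 : ℝ), F k u =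
      1 / ((k : ℝ) + 1) - ((k : ℝ) + 1) / ((k : ℝ) + 1 + x) ^ 2 :=
    fun k => integral_mul_exp_neg_mul_mul_one_sub_exp (by positivity) hx
  have hF_norm : ∀ k, ∫ u in Ioi (0 : ℝ), ‖F k u‖ = ∫ u in Ioi (0 : ℝ), F k u := fun k =>
    setIntegral_congr_fun measurableSet_Ioi fun u hu =>
      norm_of_nonneg (mul_exp_neg_mul_mul_one_sub_exp_nonneg (by positivity) hx (le_of_lt hu))
  calc ∫ u in Ioi (0 : ℝ), u * exp (-u) / (1 - exp (-u)) ^ 2 * (1 - exp (-(x * u)))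
      = ∫ u in Ioi (0 : ℝ), ∑' k, F k u :=
        setIntegral_congr_fun measurableSet_Ioi fun u hu =>
          ((hasSum_mul_exp_neg_mul hu).mul_right _).tsum_eq.symm
    _ = ∑' k, ∫ u in Ioi (0 : ℝ), F k u :=
        (integral_tsum_of_summable_integral_norm hF_int
          (by simpa only [hF_norm, hF] using summable_one_div_add_one_sub_div_add_sq hx)).symm
    _ = _ := by simp_rw [hF]

lemma tsum_one_div_add_one_sub_div_add_sq (N : ℕ) :
    ∑' k : ℕ, (1 / ((k : ℝ) + 1) - ((k : ℝ) + 1) / ((k : ℝ) + 1 + N) ^ 2) =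
      (harmonic N : ℝ) + N * ∑' k : ℕ, 1 / ((N : ℝ) + 1 + k) ^ 2 := by
  have hsum := (hasSum_one_div_add_one_sub_one_div_add_one_add N).add
    ((summable_one_div_add_natCast_sq (N + 1)).hasSum.mul_left (N : ℝ))
  refine (hsum.congr_fun fun k => ?_).tsum_eq
  field_simp
  ring

/-- `lim_{N→∞} [∫_0^∞ (u e^{−u}/(1 − e^{−u})²)(1 − e^{−Nu}) du − log N] = 1 + γ`,
where `γ` is the Euler–Mascheroni constant. -/
theorem stmt11 :
    Tendsto (fun N : ℕ =>
        (∫ u in Set.Ioi (0 : ℝ),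
          u * Real.exp (-u) / (1 - Real.exp (-u)) ^ 2 * (1 - Real.exp (-(N * u)))) -
          Real.log N)
      atTop (𝓝 (1 + Real.eulerMascheroniConstant)) := by
  have htail := tendsto_mul_tsum_one_div_add_one_add_sq.comp tendsto_natCast_atTop_atTop
  refine (htail.add tendsto_harmonic_sub_log).congr fun N => ?_
  rw [integral_mul_exp_neg_div_one_sub_exp_sq_mul_eq_tsum N.cast_nonneg,
    tsum_one_div_add_one_sub_div_add_sq]
  simp only [Function.comp_apply]
  ring
end

section
/- The function q(u) = (3/π²) · ((u/2)/sinh(u/2))² is a probability density on (0,∞), and for every complex s with Re(s) > −1, ∫_0^∞ u^s q(u) du = (3/π²) Γ(s+3) ζ(s+2), where ζ is the Riemann zeta function. Equivalently, the random variable Q with density q satisfies E[Q^s] = (3/π²) Γ(s+3) ζ(s+2). -/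
/-!
Since `((u/2)/sinh(u/2))² = u² e^{-u}/(1 - e^{-u})² = u² ∑ n e^{-nu}`, integrating termwise
against `u^s` turns the moment into the Mellin transform of a Lambert-type series,
`Γ(s+3) ∑ n · n^{-(s+3)} = Γ(s+3) ζ(s+2)`. At `s = 0` this is `Γ(3) ζ(2) = π²/3`, which gives
the normalisation.
-/

open MeasureTheory Real Set

lemma one_sub_exp_neg_sq (t : ℝ) : (1 - rexp (-t)) ^ 2 = 4 * sinh (t / 2) ^ 2 * rexp (-t) := by
  have hx : rexp (t / 2) ≠ 0 := (exp_pos _).ne'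
  rw [sinh_eq, show -t = -(t / 2) + -(t / 2) by ring, exp_add, exp_neg]
  field_simp
  ring

lemma sq_div_sinh_half (t : ℝ) :
    (t / 2 / sinh (t / 2)) ^ 2 = t ^ 2 * (rexp (-t) / (1 - rexp (-t)) ^ 2) := by
  rw [one_sub_exp_neg_sq]
  rcases eq_or_ne (sinh (t / 2)) 0 with h | h
  · simp [h]
  · have := (exp_pos (-t)).ne'
    field_simp
    ring

lemma hasSum_natCast_mul_exp_neg_mul {t : ℝ} (ht : 0 < t) :
    HasSum (fun n : ℕ ↦ (n : ℂ) * rexp (-n * t)) (rexp (-t) / (1 - rexp (-t)) ^ 2 : ℂ) := by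
  have hr : ‖(rexp (-t) : ℂ)‖ < 1 := by
    rwa [Complex.norm_real, norm_of_nonneg (exp_pos _).le, exp_lt_one_iff, neg_lt_zero]
  refine (hasSum_coe_mul_geometric_of_norm_lt_one hr).congr_fun fun n ↦ ?_
  rw [← Complex.ofReal_pow, ← Real.exp_nat_mul, mul_neg, neg_mul]

lemma natCast_div_natCast_cpow (n : ℕ) {w : ℂ} (hw : w ≠ 1) :
    (n : ℂ) / (n : ℂ) ^ w = 1 / (n : ℂ) ^ (w - 1) := by
  rcases eq_or_ne n 0 with rfl | hn
  · simp [Complex.zero_cpow (sub_ne_zero.mpr hw)]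
  · rw [Complex.cpow_sub _ _ (Nat.cast_ne_zero.mpr hn), Complex.cpow_one, one_div_div]

lemma natCast_div_natCast_rpow (n : ℕ) {a : ℝ} (ha : a ≠ 1) :
    (n : ℝ) / (n : ℝ) ^ a = 1 / (n : ℝ) ^ (a - 1) := by
  rcases eq_or_ne n 0 with rfl | hn
  · simp [zero_rpow (sub_ne_zero.mpr ha)]
  · rw [rpow_sub_one (Nat.cast_ne_zero.mpr hn), one_div_div]

lemma mellin_exp_neg_div_one_sub_exp_neg_sq {w : ℂ} (hw : 2 < w.re) :
    mellin (fun t : ℝ ↦ (rexp (-t) / (1 - rexp (-t)) ^ 2 : ℂ)) w =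
      Complex.Gamma w * riemannZeta (w - 1) := by
  have hw1 : w ≠ 1 := by rintro rfl; norm_num at hw
  have h_sum : Summable fun n : ℕ ↦ ‖(n : ℂ)‖ / (n : ℝ) ^ w.re := by
    simp_rw [Complex.norm_natCast, natCast_div_natCast_rpow _ (by linarith : w.re ≠ 1)]
    exact summable_one_div_nat_rpow.mpr (by linarith)
  have h := hasSum_mellin (fun n ↦ (Nat.eq_zero_or_pos n).imp (by simp [·]) Nat.cast_pos.mpr)
    (by linarith) (fun t ht ↦ hasSum_natCast_mul_exp_neg_mul ht) h_sum
  simp_rw [Complex.ofReal_natCast, mul_div_assoc, natCast_div_natCast_cpow _ hw1] at h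
  rw [← h.tsum_eq, tsum_mul_left, zeta_eq_tsum_one_div_nat_cpow (by simp; linarith)]

theorem integral_cpow_mul_sq_div_sinh_half {s : ℂ} (hs : -1 < s.re) :
    (∫ u in Ioi (0 : ℝ), (u : ℂ) ^ s * ((u / 2 / sinh (u / 2)) ^ 2 : ℝ)) =
      Complex.Gamma (s + 3) * riemannZeta (s + 2) := by
  rw [show s + 2 = s + 3 - 1 by ring, ← mellin_exp_neg_div_one_sub_exp_neg_sq (by simp; linarith),
    mellin]
  refine setIntegral_congr_fun measurableSet_Ioi fun t ht ↦ ?_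
  have ht0 : (t : ℂ) ≠ 0 := Complex.ofReal_ne_zero.mpr (ne_of_gt ht)
  rw [sq_div_sinh_half, show s + 3 - 1 = s + 2 by ring, Complex.cpow_add _ _ ht0,
    Complex.cpow_ofNat, smul_eq_mul]
  push_cast
  ring

/-- The function `q(u) = (3/π²)((u/2)/sinh(u/2))²` is a probability density on `(0,∞)`, and
the random variable `Q` with density `q` satisfies, for every complex `s` with `Re s > −1`,
`E[Q^s] = ∫_0^∞ u^s q(u) du = (3/π²) Γ(s+3) ζ(s+2)`. -/
theorem stmt14 :
    (∀ u : ℝ, 0 ≤ 3 / Real.pi ^ 2 * (u / 2 / Real.sinh (u / 2)) ^ 2) ∧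
    (∫ u in Set.Ioi (0 : ℝ), 3 / Real.pi ^ 2 * (u / 2 / Real.sinh (u / 2)) ^ 2) = 1 ∧
    ∀ s : ℂ, -1 < s.re →
      (∫ u in Set.Ioi (0 : ℝ),
          (u : ℂ) ^ s * (3 / Real.pi ^ 2 * (u / 2 / Real.sinh (u / 2)) ^ 2 : ℝ)) =
        3 / (Real.pi : ℂ) ^ 2 * Complex.Gamma (s + 3) * riemannZeta (s + 2) := by
  have moments (s : ℂ) (hs : -1 < s.re) :
      (∫ u in Ioi (0 : ℝ), (u : ℂ) ^ s * (3 / π ^ 2 * (u / 2 / sinh (u / 2)) ^ 2 : ℝ)) =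
        3 / (π : ℂ) ^ 2 * Complex.Gamma (s + 3) * riemannZeta (s + 2) := by
    simp_rw [Complex.ofReal_mul, mul_left_comm _ ((3 / π ^ 2 : ℝ) : ℂ), integral_const_mul,
      integral_cpow_mul_sq_div_sinh_half hs]
    push_cast
    ring
  refine ⟨fun u ↦ by positivity, ?_, moments⟩
  have hGamma : Complex.Gamma (0 + 3) = 2 := by
    rw [zero_add, show (3 : ℂ) = (2 : ℕ) + 1 by norm_num, Complex.Gamma_nat_eq_factorial]
    norm_num
  have hπ : (π : ℂ) ≠ 0 := Complex.ofReal_ne_zero.mpr pi_ne_zero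
  have hmass := moments 0 (by norm_num)
  simp_rw [Complex.cpow_zero, one_mul, hGamma, zero_add, riemannZeta_two] at hmass
  rw [integral_complex_ofReal,
    show 3 / (π : ℂ) ^ 2 * 2 * (π ^ 2 / 6) = 1 by field_simp; norm_num] at hmass
  exact_mod_cast hmass
end

section
/- For every complex z with |z| < 1, G(1+z) = exp{ (z/2)(log(2π) − 1) − (1+γ)z²/2 + Σ_{n=3}^∞ (−1)^{n−1} ζ(n−1) z^n / n }, where the series converges absolutely; equivalently, log G(1+z) admits this power series expansion. -/
/-!
Taking logarithms factor by factor, `(n + 1) log(1 + z/(n + 1)) - z + z²/(2(n + 1))` is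
`n + 1` times the Taylor series of `log(1 + w)` at `w = z/(n + 1)` without its first two terms,
`∑_{k ≥ 0} (-1)^k z^{k+3} / ((k + 3)(n + 1)^{k+2})`. For `|z| < 1` this double series is
dominated by `|z|^k / (n + 1)²`, so it may be summed over `n` first, which turns
`∑_n (n + 1)^{-(k+2)}` into `ζ(k + 2)`.
-/

open Complex

lemma hasSum_taylorSeries_log_tail {w : ℂ} (hw : ‖w‖ < 1) :
    HasSum (fun k : ℕ => (-1) ^ (k + 2) * w ^ (k + 3) / (k + 3))
      (log (1 + w) - w + w ^ 2 / 2) := by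
  have hhead : ∑ i ∈ Finset.range 3, ((-1) ^ (i + 1) * w ^ i / i : ℂ) = w - w ^ 2 / 2 := by
    simp [Finset.sum_range_succ]
    ring
  rw [sub_add, ← hhead]
  refine ((hasSum_nat_add_iff' 3).mpr (hasSum_taylorSeries_log hw)).congr_fun fun k => ?_
  push_cast
  ring

lemma norm_div_nat_add_one_lt_one {z : ℂ} {n : ℕ} (hz : ‖z‖ < n + 1) : ‖z / (n + 1)‖ < 1 := by
  have hn : ‖(n : ℂ) + 1‖ = n + 1 := by exact_mod_cast norm_natCast (n + 1)
  rwa [norm_div, hn, div_lt_one (by positivity)]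

noncomputable def barnesLogTerm (z : ℂ) (n k : ℕ) : ℂ :=
  (-1) ^ (k + 2) * z ^ (k + 3) / ((k + 3) * ((n : ℂ) + 1) ^ (k + 2))

lemma hasSum_barnesLogTerm_log {z : ℂ} {n : ℕ} (hz : ‖z‖ < n + 1) :
    HasSum (barnesLogTerm z n)
      ((n + 1) * log (1 + z / (n + 1)) - z + z ^ 2 / (2 * (n + 1))) := by
  have hlog := (hasSum_taylorSeries_log_tail (norm_div_nat_add_one_lt_one hz)).mul_left
    ((n : ℂ) + 1)
  rw [show (n + 1) * log (1 + z / (n + 1)) - z + z ^ 2 / (2 * (n + 1)) =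
      (n + 1) * (log (1 + z / (n + 1)) - z / (n + 1) + (z / (n + 1)) ^ 2 / 2) by
    field_simp]
  refine hlog.congr_fun fun k => ?_
  simp only [barnesLogTerm, div_pow]
  field_simp
  ring

lemma hasSum_barnesLogTerm_zeta (z : ℂ) (k : ℕ) :
    HasSum (fun n => barnesLogTerm z n k)
      ((-1) ^ (k + 2) * riemannZeta (k + 2) * z ^ (k + 3) / (k + 3)) := by
  have hζ : HasSum (fun n : ℕ => 1 / ((n : ℂ) + 1) ^ (k + 2)) (riemannZeta (k + 2)) := by
    have hk : 1 < ((k : ℂ) + 2).re := by simp; linarith [(k.cast_nonneg : (0 : ℝ) ≤ k)]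
    rw [zeta_eq_tsum_one_div_nat_add_one_cpow hk]
    have hs := (summable_nat_add_iff 1).mpr (summable_one_div_nat_cpow.mpr hk)
    exact_mod_cast hs.hasSum
  rw [mul_right_comm, mul_div_right_comm]
  exact (hζ.mul_left _).congr_fun fun n => by rw [barnesLogTerm, mul_one_div, div_div]

lemma norm_barnesLogTerm_le {z : ℂ} (hz : ‖z‖ ≤ 1) (n k : ℕ) :
    ‖barnesLogTerm z n k‖ ≤ 1 / ((n : ℝ) + 1) ^ 2 * ‖z‖ ^ k := by
  have hn : (1 : ℝ) ≤ n + 1 := by simp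
  calc ‖barnesLogTerm z n k‖ = ‖z‖ ^ (k + 3) / ((k + 3) * ((n : ℝ) + 1) ^ (k + 2)) := by
        simp only [barnesLogTerm, norm_div, norm_mul, norm_pow, norm_neg, norm_one, one_pow,
          one_mul]
        norm_cast
    _ ≤ ‖z‖ ^ k / (1 * ((n : ℝ) + 1) ^ 2) := by
        gcongr ?_ / (?_ * ?_)
        · exact pow_le_pow_of_le_one (norm_nonneg z) hz (by omega)
        · linarith [(k.cast_nonneg : (0 : ℝ) ≤ k)]
        · exact pow_le_pow_right₀ hn (by omega)
    _ = 1 / ((n : ℝ) + 1) ^ 2 * ‖z‖ ^ k := by ring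

lemma summable_norm_barnesLogTerm {z : ℂ} (hz : ‖z‖ < 1) :
    Summable (fun p : ℕ × ℕ => ‖barnesLogTerm z p.1 p.2‖) := by
  have h2 : Summable (fun n : ℕ => 1 / ((n : ℝ) + 1) ^ 2) := by
    exact_mod_cast (summable_nat_add_iff 1).mpr (Real.summable_one_div_nat_pow.mpr one_lt_two)
  refine (h2.mul_of_nonneg (summable_geometric_of_lt_one (norm_nonneg z) hz)
    (fun _ => by positivity) (fun _ => by positivity)).of_nonneg_of_le
    (fun _ => norm_nonneg _) fun p => norm_barnesLogTerm_le hz.le p.1 p.2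

lemma summable_norm_zeta_series {z : ℂ} (hz : ‖z‖ < 1) :
    Summable (fun m : ℕ =>
      ‖((-1) ^ (m + 2) * riemannZeta (m + 2) * z ^ (m + 3) / (m + 3) : ℂ)‖) := by
  have h := (summable_norm_barnesLogTerm hz).prod_symm
  refine h.prod.of_nonneg_of_le (fun _ => norm_nonneg _) fun k => ?_
  rw [← (hasSum_barnesLogTerm_zeta z k).tsum_eq]
  exact norm_tsum_le_tsum_norm (h.prod_factor k)

lemma hasSum_log_barnesFactor {z : ℂ} (hz : ‖z‖ < 1) :
    HasSum (fun n : ℕ => (n + 1) * log (1 + z / (n + 1)) - z + z ^ 2 / (2 * (n + 1)))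
      (∑' m : ℕ, (-1) ^ (m + 2) * riemannZeta (m + 2) * z ^ (m + 3) / (m + 3)) := by
  have hs := (summable_norm_barnesLogTerm hz).of_norm
  have hrows := hs.hasSum.prod_fiberwise fun n =>
    hasSum_barnesLogTerm_log (hz.trans_le (by simp : (1 : ℝ) ≤ n + 1))
  have hcols := ((Equiv.prodComm ℕ ℕ).hasSum_iff.mpr hs.hasSum).prod_fiberwise
    (hasSum_barnesLogTerm_zeta z)
  rwa [hcols.tsum_eq]

lemma hasProd_barnesFactor {z : ℂ} (hz : ‖z‖ < 1) :
    HasProd (fun n : ℕ => (1 + z / (n + 1)) ^ (n + 1) * exp (-z + z ^ 2 / (2 * (n + 1))))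
      (exp (∑' m : ℕ, (-1) ^ (m + 2) * riemannZeta (m + 2) * z ^ (m + 3) / (m + 3))) := by
  convert (hasSum_log_barnesFactor hz).cexp using 1
  funext n
  have hw := norm_div_nat_add_one_lt_one (hz.trans_le (by simp : (1 : ℝ) ≤ n + 1))
  have hne : 1 + z / (n + 1) ≠ 0 := fun h => by
    rw [eq_neg_of_add_eq_zero_right h, norm_neg, norm_one] at hw
    exact lt_irrefl 1 hw
  rw [← cpow_natCast, cpow_def_of_ne_zero hne, ← exp_add, Function.comp_apply]
  push_cast
  congr 1
  ring

/-- For every complex `z` with `|z| < 1`,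
`G(1+z) = exp{(z/2)(log(2π) − 1) − (1+γ)z²/2 + ∑_{n=3}^∞ (−1)^{n−1} ζ(n−1) z^n/n}`,
the series converging absolutely (here the series is indexed by `n = m + 3`, `m : ℕ`). -/
theorem stmt16 (z : ℂ) (hz : ‖z‖ < 1) :
    Summable (fun m : ℕ =>
      ‖((-1) ^ (m + 2) * riemannZeta (m + 2) * z ^ (m + 3) / (m + 3) : ℂ)‖) ∧
    barnesG (1 + z) =
      Complex.exp (z / 2 * (Real.log (2 * Real.pi) - 1) -
        (1 + (Real.eulerMascheroniConstant : ℂ)) * z ^ 2 / 2 +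
        ∑' m : ℕ, (-1) ^ (m + 2) * riemannZeta (m + 2) * z ^ (m + 3) / (m + 3)) := by
  refine ⟨summable_norm_zeta_series hz, ?_⟩
  have h2π : (2 * Real.pi : ℂ) ^ (z / 2) = exp (z / 2 * Real.log (2 * Real.pi)) := by
    rw [cpow_def_of_ne_zero (by simp [Real.pi_ne_zero]), ofReal_log (by positivity), mul_comm]
    push_cast
    rfl
  rw [barnesG, add_sub_cancel_left, (hasProd_barnesFactor hz).tprod_eq, h2π, ← exp_add,
    ← exp_add]
  congr 1
  ring
end

section
/- Let f : (0,∞) → [0,∞) be a Borel function with ∫_0^∞ log(1 + f(u)) du < ∞. Then for every λ ≥ 0, ∫_0^∞ du ∫_0^∞ (dx/x) e^{−x} (1 − e^{−λ f(u) x}) = ∫_0^∞ (dy/y) (∫_0^∞ du e^{−y/f(u)}) (1 − e^{−λy}), where e^{−y/f(u)} is interpreted as 0 when f(u) = 0, and both double integrals are finite. Consequently, the random variable Y = ∫_0^∞ f(u) dγ_u (integral of f against a standard gamma subordinator) satisfies E[e^{−λY}] = exp(−∫_0^∞ (dy/y)(∫_0^∞ du e^{−y/f(u)})(1 − e^{−λy})),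 so Y is a generalized gamma convolution variable. -/
/-!
Both sides equal `∫_0^∞ log (1 + λ f(u)) du`. For fixed `u`, each inner integral is a Frullani
integral `∫_0^∞ (e^{-a y} - e^{-b y}) dy / y = log (b / a)`: with `a = 1`, `b = 1 + λ f(u)` on the
left and, after exchanging the order of integration on the right, with `a = 1 / f(u)`,
`b = 1 / f(u) + λ`. The Frullani integral itself follows from Tonelli, writing
`(e^{-a y} - e^{-b y}) / y = ∫_a^b e^{-t y} dt`. Finiteness comes from
`log (1 + λ c) ≤ max 1 λ · log (1 + c)`.
-/

open MeasureTheory Real Set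

theorem integral_exp_neg_mul {a b y : ℝ} (hy : y ≠ 0) :
    ∫ t in a..b, exp (-(t * y)) = (exp (-(a * y)) - exp (-(b * y))) / y := by
  have hderiv (t : ℝ) : HasDerivAt (fun t => -exp (-(t * y)) / y) (exp (-(t * y))) t := by
    refine (((hasDerivAt_id t).mul_const y).neg.exp.neg.div_const y).congr_deriv ?_
    simp [field]
  rw [intervalIntegral.integral_eq_sub_of_hasDerivAt (fun t _ => hderiv t)
    (Continuous.intervalIntegrable (by fun_prop) _ _)]
  ring

theorem lintegral_exp_neg_mul_Ioi {t : ℝ} (ht : 0 < t) :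
    ∫⁻ y in Ioi 0, ENNReal.ofReal (exp (-(t * y))) = ENNReal.ofReal t⁻¹ := by
  simp_rw [← neg_mul]
  rw [← ofReal_integral_eq_lintegral_ofReal (integrableOn_exp_mul_Ioi (neg_neg_of_pos ht) 0)
    (ae_of_all _ fun _ => (exp_pos _).le), integral_exp_mul_Ioi (neg_neg_of_pos ht)]
  simp

theorem lintegral_exp_frullani {a b : ℝ} (ha : 0 < a) (hab : a ≤ b) :
    ∫⁻ y in Ioi 0, ENNReal.ofReal ((exp (-(a * y)) - exp (-(b * y))) / y) =
      ENNReal.ofReal (log (b / a)) := by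
  have hpos : ∀ t ∈ Ioc a b, 0 < t := fun t ht => ha.trans ht.1
  calc _ = ∫⁻ y in Ioi 0, ∫⁻ t in Ioc a b, ENNReal.ofReal (exp (-(t * y))) := by
        refine setLIntegral_congr_fun measurableSet_Ioi fun y hy => ?_
        rw [← ofReal_integral_eq_lintegral_ofReal
          ((by fun_prop : Continuous fun t => exp (-(t * y))).integrableOn_Ioc)
          (ae_of_all _ fun _ => (exp_pos _).le),
          ← intervalIntegral.integral_of_le hab, integral_exp_neg_mul (ne_of_gt hy)]
    _ = ∫⁻ t in Ioc a b, ∫⁻ y in Ioi 0, ENNReal.ofReal (exp (-(t * y))) :=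
        lintegral_lintegral_swap (by fun_prop)
    _ = ∫⁻ t in Ioc a b, ENNReal.ofReal t⁻¹ :=
        setLIntegral_congr_fun measurableSet_Ioc fun t ht => lintegral_exp_neg_mul_Ioi (hpos t ht)
    _ = ENNReal.ofReal (log (b / a)) := by
        rw [← ofReal_integral_eq_lintegral_ofReal, ← intervalIntegral.integral_of_le hab,
          integral_inv_of_pos ha (ha.trans_le hab)]
        · exact (continuousOn_inv₀.mono fun t ht => (ha.trans_le ht.1).ne').integrableOn_Icc
            |>.mono_set Ioc_subset_Icc_self
        · exact ae_restrict_of_forall_mem measurableSet_Ioc fun t ht => (inv_pos.2 (hpos t ht)).le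

theorem lintegral_exp_neg_mul_one_sub_exp_div {a b : ℝ} (ha : 0 < a) (hb : 0 ≤ b) :
    ∫⁻ y in Ioi 0, ENNReal.ofReal (exp (-(a * y)) * (1 - exp (-(b * y))) / y) =
      ENNReal.ofReal (log (1 + b / a)) := by
  have hexp (y : ℝ) : exp (-(a * y)) * (1 - exp (-(b * y))) =
      exp (-(a * y)) - exp (-((a + b) * y)) := by
    rw [mul_one_sub, ← exp_add]; ring_nf
  simp_rw [hexp]
  rw [lintegral_exp_frullani ha (le_add_of_nonneg_right hb), add_div, div_self ha.ne']

theorem lintegral_ite_exp_neg_div_mul_one_sub_exp_div {s l : ℝ} (hs : 0 ≤ s) (hl : 0 ≤ l) :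
    ∫⁻ y in Ioi 0, ENNReal.ofReal (if s = 0 then 0 else exp (-(y / s))) *
      ENNReal.ofReal ((1 - exp (-(l * y))) / y) = ENNReal.ofReal (log (1 + l * s)) := by
  rcases hs.eq_or_lt with rfl | hs
  · simp
  simp_rw [if_neg hs.ne', ← ENNReal.ofReal_mul (exp_pos _).le, div_eq_inv_mul _ s, ← mul_div_assoc]
  rw [lintegral_exp_neg_mul_one_sub_exp_div (inv_pos.2 hs) hl, div_inv_eq_mul]

theorem Real.log_one_add_mul_le_max_mul {c l : ℝ} (hc : 0 ≤ c) (hl : 0 ≤ l) :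
    log (1 + l * c) ≤ max 1 l * log (1 + c) := by
  have hlog : 0 ≤ log (1 + c) := log_nonneg (by linarith)
  rcases le_total l 1 with hl1 | hl1
  · calc log (1 + l * c) ≤ log (1 + c) := log_le_log (by positivity) (by nlinarith)
      _ ≤ max 1 l * log (1 + c) := le_mul_of_one_le_left hlog (le_max_left 1 l)
  · calc log (1 + l * c) ≤ log ((1 + c) ^ l) :=
          log_le_log (by positivity) (one_add_mul_self_le_rpow_one_add (by linarith) hl1)
      _ = l * log (1 + c) := log_rpow (by linarith) l
      _ ≤ max 1 l * log (1 + c) := mul_le_mul_of_nonneg_right (le_max_right 1 l) hlog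

theorem lintegral_ofReal_log_one_add_mul_lt_top {α : Type*} [MeasurableSpace α] {μ : Measure α}
    {f : α → ℝ} (hf0 : ∀ u, 0 ≤ f u) (hlog : Integrable (fun u => log (1 + f u)) μ) {l : ℝ}
    (hl : 0 ≤ l) : ∫⁻ u, ENNReal.ofReal (log (1 + l * f u)) ∂μ < ⊤ :=
  (hlog.const_mul (max 1 l)).lintegral_lt_top.trans_le' <|
    lintegral_mono fun u => ENNReal.ofReal_le_ofReal (log_one_add_mul_le_max_mul (hf0 u) hl)

/-- Let `f : (0,∞) → [0,∞)` be Borel with `∫_0^∞ log(1 + f(u)) du < ∞`. Then for every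
`λ ≥ 0`,
`∫_0^∞ du ∫_0^∞ (dx/x) e^{−x}(1 − e^{−λ f(u) x})
  = ∫_0^∞ (dy/y)(∫_0^∞ du e^{−y/f(u)})(1 − e^{−λy})`,
where `e^{−y/f(u)}` is interpreted as `0` when `f(u) = 0`, and both (nonnegative) double
integrals are finite. (Consequently, `Y = ∫_0^∞ f(u) dγ_u` has Laplace transform
`exp` of minus this quantity, so `Y` is a generalized gamma convolution variable.) -/
theorem stmt17 (f : ℝ → ℝ) (hf : Measurable f) (hf0 : ∀ u, 0 ≤ f u)
    (hlog : IntegrableOn (fun u => Real.log (1 + f u)) (Set.Ioi 0))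
    (l : ℝ) (hl : 0 ≤ l) :
    (∫⁻ u in Set.Ioi (0 : ℝ), ∫⁻ x in Set.Ioi (0 : ℝ),
        ENNReal.ofReal (Real.exp (-x) * (1 - Real.exp (-(l * f u * x))) / x)) =
      (∫⁻ y in Set.Ioi (0 : ℝ),
        (∫⁻ u in Set.Ioi (0 : ℝ),
            ENNReal.ofReal (if f u = 0 then 0 else Real.exp (-(y / f u)))) *
          ENNReal.ofReal ((1 - Real.exp (-(l * y))) / y)) ∧
    (∫⁻ u in Set.Ioi (0 : ℝ), ∫⁻ x in Set.Ioi (0 : ℝ),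
        ENNReal.ofReal (Real.exp (-x) * (1 - Real.exp (-(l * f u * x))) / x)) < ⊤ := by
  have hgamma (u : ℝ) : ∫⁻ x in Ioi 0, ENNReal.ofReal (exp (-x) * (1 - exp (-(l * f u * x))) / x)
      = ENNReal.ofReal (log (1 + l * f u)) := by
    simpa using lintegral_exp_neg_mul_one_sub_exp_div one_pos (mul_nonneg hl (hf0 u))
  simp_rw [lintegral_congr hgamma, ← lintegral_mul_const' _ _ ENNReal.ofReal_ne_top]
  refine ⟨?_, lintegral_ofReal_log_one_add_mul_lt_top hf0 hlog hl⟩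
  rw [lintegral_lintegral_swap ?_]
  · exact lintegral_congr fun u =>
      (lintegral_ite_exp_neg_div_mul_one_sub_exp_div (hf0 u) hl).symm
  · have hdens : Measurable fun p : ℝ × ℝ => if f p.2 = 0 then 0 else exp (-(p.1 / f p.2)) :=
      Measurable.ite ((measurableSet_singleton 0).preimage (hf.comp measurable_snd))
        measurable_const (by fun_prop)
    exact (hdens.ennreal_ofReal.mul (by fun_prop)).aemeasurable
end
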